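/- The set of feasible points {(q,u) ∈ V × 𝒰 : G(q,u) = 0} of the stationary bilinear optimal control problem, where G(q,u) = Aq + B(u,q) − s with ⟨Aq,φ⟩ = μ∫_Ω ∇q·∇φ − ∫_{Γ_d} qφ and ⟨B(u,q),φ⟩ = ∫_{Ω_c} u∇q·∇φ, is weakly sequentially closed in V × 𝒰, where V = H¹_{Γ_o}(Ω) and 𝒰 = H²(Ω_c): that is, if u_n ⇀ u in 𝒰, q_n ⇀ q in V, and G(q_n,u_n) = 0 for all n, then G(q,u) = 0. -/
import Mathlib


open RealInnerProductSpace Filter Topology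

/-- Weak convergence of a sequence in a normed space. -/
def WeakConv {E : Type*} [NormedAddCommGroup E] [NormedSpace ℝ E]
    (x : ℕ → E) (x₀ : E) : Prop :=
  ∀ f : E →L[ℝ] ℝ, Tendsto (fun n => f (x n)) atTop (𝓝 (f x₀))

/-- Weak sequential closedness of the feasible set of the
stationary bilinear OCP.  `U = H²(Ω_c)` (control space), `Uinf = L^∞(Ω_c)` with
the compact embedding `ι : H²(Ω_c) ↪↪ L^∞(Ω_c)` (weakly convergent sequences
are mapped to norm-convergent ones), `V = H¹_{Γ_o}(Ω)`, `G = L²(Ω)²`,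
`W = L²(Γ_d)`; `m w g = w·g` multiplication. The state equation `G(q,u) = 0`
reads `μ∫∇q·∇φ − ∫_{Γ_d} qφ + ∫_{Ω_c} u∇q·∇φ = ⟨s,φ⟩` for all `φ ∈ V`.  If
`u_n ⇀ u` in `U`, `q_n ⇀ q` in `V` and `G(q_n,u_n) = 0` for all `n`, then
`G(q,u) = 0`. -/
theorem feasible_set_weakly_sequentially_closed
    {U Uinf V G W : Type*}
    [NormedAddCommGroup U] [InnerProductSpace ℝ U] [CompleteSpace U]
    [NormedAddCommGroup Uinf] [NormedSpace ℝ Uinf]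
    [NormedAddCommGroup V] [InnerProductSpace ℝ V] [CompleteSpace V]
    [NormedAddCommGroup G] [InnerProductSpace ℝ G]
    [NormedAddCommGroup W] [InnerProductSpace ℝ W]
    (ι : U →L[ℝ] Uinf)
    (hcompact : ∀ (xn : ℕ → U) (x : U), WeakConv xn x →
        Tendsto (fun n => ‖ι (xn n) - ι x‖) atTop (𝓝 0))
    (grad : V →L[ℝ] G) (tr : V →L[ℝ] W)
    (m : Uinf →ₗ[ℝ] G →ₗ[ℝ] G)
    (hm : ∀ (w : Uinf) (g : G), ‖m w g‖ ≤ ‖w‖ * ‖g‖)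
    (hsym : ∀ (w : Uinf) (g g' : G), ⟪m w g, g'⟫ = ⟪g, m w g'⟫)
    (μ : ℝ) (hμ : 0 < μ) (s : V →L[ℝ] ℝ)
    (un : ℕ → U) (u : U) (qn : ℕ → V) (q : V)
    (hun : WeakConv un u) (hqn : WeakConv qn q)
    (hfeas : ∀ (n : ℕ) (φ : V),
        μ * ⟪grad (qn n), grad φ⟫ - ⟪tr (qn n), tr φ⟫
          + ⟪m (ι (un n)) (grad (qn n)), grad φ⟫ = s φ) :
    ∀ φ : V, μ * ⟪grad q, grad φ⟫ - ⟪tr q, tr φ⟫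
      + ⟪m (ι u) (grad q), grad φ⟫ = s φ := by
  intro φ
  -- boundedness of qn
  obtain ⟨C, hC⟩ : ∃ C, ∀ n, ‖qn n‖ ≤ C := by
    obtain ⟨C', hC'⟩ := banach_steinhaus
      (g := fun n => (InnerProductSpace.toDual ℝ V (qn n) : V →L[ℝ] ℝ))
      (by
        intro y
        have h := hqn (InnerProductSpace.toDual ℝ V y)
        have hb : BddAbove (Set.range fun n =>
            ‖(InnerProductSpace.toDual ℝ V y) (qn n)‖) :=
          h.norm.bddAbove_range
        obtain ⟨C, hC⟩ := hb
        refine ⟨C, fun n => ?_⟩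
        have : ‖(InnerProductSpace.toDual ℝ V (qn n)) y‖
            = ‖(InnerProductSpace.toDual ℝ V y) (qn n)‖ := by
          simp [InnerProductSpace.toDual_apply_apply, real_inner_comm, Real.norm_eq_abs]
        rw [this]
        exact hC ⟨n, rfl⟩)
    exact ⟨C', fun n => by
      simpa using (hC' n)⟩
  -- weak convergence of grad qn against fixed vectors
  have key : ∀ g : G, Tendsto (fun n => ⟪grad (qn n), g⟫) atTop (𝓝 ⟪grad q, g⟫) := by
    intro g
    have := hqn ((innerSL ℝ g).comp grad)
    simpa [real_inner_comm] using this
  have trkey : Tendsto (fun n => ⟪tr (qn n), tr φ⟫) atTop (𝓝 ⟪tr q, tr φ⟫) := by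
    have := hqn ((innerSL ℝ (tr φ)).comp tr)
    simpa [real_inner_comm] using this
  -- error term → 0
  have herr : Tendsto (fun n => ⟪m (ι (un n) - ι u) (grad (qn n)), grad φ⟫)
      atTop (𝓝 0) := by
    have hbound : ∀ n, |⟪m (ι (un n) - ι u) (grad (qn n)), grad φ⟫|
        ≤ ‖ι (un n) - ι u‖ * ((‖grad‖ * C) * ‖grad φ‖) := by
      intro n
      calc |⟪m (ι (un n) - ι u) (grad (qn n)), grad φ⟫|
          ≤ ‖m (ι (un n) - ι u) (grad (qn n))‖ * ‖grad φ‖ :=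
            abs_real_inner_le_norm _ _
        _ ≤ (‖ι (un n) - ι u‖ * ‖grad (qn n)‖) * ‖grad φ‖ := by
            gcongr; exact hm _ _
        _ ≤ (‖ι (un n) - ι u‖ * (‖grad‖ * C)) * ‖grad φ‖ := by
            gcongr
            calc ‖grad (qn n)‖ ≤ ‖grad‖ * ‖qn n‖ := grad.le_opNorm _
              _ ≤ ‖grad‖ * C := by gcongr; exact hC n
        _ = ‖ι (un n) - ι u‖ * ((‖grad‖ * C) * ‖grad φ‖) := by ring
    have hz : Tendsto (fun n => ‖ι (un n) - ι u‖ * ((‖grad‖ * C) * ‖grad φ‖))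
        atTop (𝓝 0) := by
      simpa using (hcompact un u hun).mul_const ((‖grad‖ * C) * ‖grad φ‖)
    exact squeeze_zero_norm (fun n => by simpa [Real.norm_eq_abs] using hbound n) hz
  -- main convergence
  have hmain : Tendsto (fun n =>
      μ * ⟪grad (qn n), grad φ⟫ - ⟪tr (qn n), tr φ⟫
        + ⟪m (ι (un n)) (grad (qn n)), grad φ⟫) atTop
      (𝓝 (μ * ⟪grad q, grad φ⟫ - ⟪tr q, tr φ⟫ + ⟪m (ι u) (grad q), grad φ⟫)) := by
    have h3a : Tendsto (fun n => ⟪m (ι u) (grad (qn n)), grad φ⟫) atTop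
        (𝓝 ⟪m (ι u) (grad q), grad φ⟫) := by
      have := key (m (ι u) (grad φ))
      simpa [hsym] using this
    have h3 : Tendsto (fun n => ⟪m (ι (un n)) (grad (qn n)), grad φ⟫) atTop
        (𝓝 ⟪m (ι u) (grad q), grad φ⟫) := by
      have := h3a.add herr
      simp only [add_zero] at this
      refine this.congr fun n => ?_
      rw [map_sub, LinearMap.sub_apply, inner_sub_left]
      ring
    exact (((key (grad φ)).const_mul μ).sub trkey).add h3
  have hconst : Tendsto (fun _ : ℕ => s φ) atTop (𝓝 (s φ)) := tendsto_const_nhds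
  exact tendsto_nhds_unique (hmain.congr fun n => hfeas n φ) hconst
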